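/- arXiv:0806.0103 — 2 statements merged into one kernel-verified Lean document; each statement's English description precedes it below -/
import Mathlib

section
/- Every 1-coloured (i.e., all elements have colour 0) σ-structure A satisfies ucw(A) ≤ pw(G_A) + 2, where G_A is the Gaifman graph of A and pw denotes path-width. -/
/-- A relational signature: a type of relation symbols with arities. -/
structure Signature where
  symbols : Type
  ar : symbols → ℕ

/-- A coloured σ-structure: a carrier, interpretations of the relation
symbols, and a colouring of the elements by natural numbers. -/
structure CStruc (σ : Signature) where
  carrier : Type
  rel : ∀ R : σ.symbols, (Fin (σ.ar R) → carrier) → Prop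
  col : carrier → ℕ

/-- Isomorphism of coloured structures. -/
structure CIso {σ : Signature} (A B : CStruc σ) where
  toEquiv : A.carrier ≃ B.carrier
  rel_iff : ∀ (R : σ.symbols) (t : Fin (σ.ar R) → A.carrier),
    A.rel R t ↔ B.rel R fun i => toEquiv (t i)
  col_eq : ∀ a, B.col (toEquiv a) = A.col a

/-- Disjoint union of coloured structures. -/
def CStruc.union {σ : Signature} (A B : CStruc σ) : CStruc σ where
  carrier := A.carrier ⊕ B.carrier
  rel R t := (∃ s, (∀ i, t i = Sum.inl (s i)) ∧ A.rel R s) ∨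
             (∃ s, (∀ i, t i = Sum.inr (s i)) ∧ B.rel R s)
  col := Sum.elim A.col B.col

/-- Recolouring of a coloured structure. -/
def CStruc.recolor {σ : Signature} (A : CStruc σ) (f : ℕ → ℕ) : CStruc σ where
  carrier := A.carrier
  rel := A.rel
  col := f ∘ A.col

/-- Introduce into the relation `R` all tuples whose colours match `c`. -/
def CStruc.introduce {σ : Signature} (A : CStruc σ) (R : σ.symbols)
    (c : Fin (σ.ar R) → ℕ) : CStruc σ where
  carrier := A.carrier
  rel S t := A.rel S t ∨ ∃ h : S = R, ∀ i : Fin (σ.ar R),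
    A.col (t (Fin.cast (congrArg σ.ar h).symm i)) = c i
  col := A.col

/-- The class UCW_k[σ]: coloured structures of unary clique-width at most `k`,
generated from empty structures and relation-free singletons of colour 0 by
disjoint union, recolouring (by functions on the colours `< k`), and
introduction of a relation along a tuple of colours, closed under isomorphism. -/
inductive UCW (σ : Signature) (k : ℕ) : CStruc σ → Prop where
  | empty (A : CStruc σ) (h : IsEmpty A.carrier) : UCW σ k A
  | single (hk : 0 < k) (A : CStruc σ) (hsub : ∀ a b : A.carrier, a = b)
      (hne : Nonempty A.carrier)
      (hrel : ∀ (R : σ.symbols) (t : Fin (σ.ar R) → A.carrier), ¬ A.rel R t)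
      (hcol : ∀ a, A.col a = 0) : UCW σ k A
  | union {A B : CStruc σ} : UCW σ k A → UCW σ k B → UCW σ k (A.union B)
  | recolor {A : CStruc σ} (f : ℕ → ℕ) (hf : ∀ i, i < k → f i < k) :
      UCW σ k A → UCW σ k (A.recolor f)
  | introduce {A : CStruc σ} (R : σ.symbols) (c : Fin (σ.ar R) → ℕ)
      (hc : ∀ i, c i < k) : UCW σ k A → UCW σ k (A.introduce R c)
  | iso {A B : CStruc σ} (e : CIso A B) : UCW σ k A → UCW σ k B

/-- Unary clique-width: the least `k` such that the structure is in UCW_k[σ]. -/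
noncomputable def ucw {σ : Signature} (A : CStruc σ) : ℕ := sInf {k | UCW σ k A}

/-- The Gaifman graph of a structure: distinct elements are adjacent iff they
occur together in some tuple of some relation. -/
def CStruc.gaifman {σ : Signature} (A : CStruc σ) : SimpleGraph A.carrier where
  Adj a b := a ≠ b ∧ ∃ (R : σ.symbols) (u : Fin (σ.ar R) → A.carrier),
    A.rel R u ∧ (∃ i, u i = a) ∧ (∃ j, u j = b)
  symm := by
    refine ⟨?_⟩
    rintro a b ⟨hne, R, u, hu, hi, hj⟩
    exact ⟨hne.symm, R, u, hu, hj, hi⟩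
  loopless := by refine ⟨?_⟩; rintro a ⟨hne, -⟩; exact hne rfl

/-- A path decomposition of `G` with `n` bags. -/
structure PathDecomp {V : Type} (G : SimpleGraph V) (n : ℕ) where
  bag : Fin n → Set V
  mem_bag : ∀ v, ∃ i, v ∈ bag i
  mem_edge : ∀ u v, G.Adj u v → ∃ i, u ∈ bag i ∧ v ∈ bag i
  interval : ∀ (v : V) (i j m : Fin n), i ≤ m → m ≤ j →
    v ∈ bag i → v ∈ bag j → v ∈ bag m

/-- `G` has path-width at most `w`. -/
def pwLe {V : Type} (G : SimpleGraph V) (w : ℕ) : Prop :=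
  ∃ n, ∃ P : PathDecomp G n, ∀ i, (P.bag i).ncard ≤ w + 1

/-- The path-width of `G`. -/
noncomputable def pw {V : Type} (G : SimpleGraph V) : ℕ := sInf {w | pwLe G w}


/-!
Fix a path decomposition `B₀, …, B_{n-1}` of width `w`, and colour the vertices of each bag `Bᵢ`
injectively by `1, …, w + 1` and all other vertices by `0`. Stage `i` is the substructure of `A`
on `B₀ ∪ … ∪ Bᵢ₋₁` keeping only the tuples that lie inside one of these bags, coloured as for
`Bᵢ`. Stage `i + 1` arises from stage `i` by adding the new vertices of `Bᵢ` as singletons,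
introducing the colour patterns of the tuples of `A` inside `Bᵢ` (the colouring is injective on
`Bᵢ`, so these patterns select exactly those tuples), and recolouring as for `Bᵢ₊₁`. This
recolouring is a function of the colours because a vertex outside `Bᵢ` already has colour `0`
and, by the interval property, never comes back. The vertices of a tuple are pairwise adjacent
in the Gaifman graph, so by the Helly property of intervals every tuple lies in one bag, and
stage `n` is `A`. Only the colours `0, …, w + 1` occur.
-/

variable {σ : Signature}

namespace CStruc

def introduceSet (X : CStruc σ) (T : Set ((R : σ.symbols) × (Fin (σ.ar R) → ℕ))) :
    CStruc σ where
  carrier := X.carrier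
  rel S t := X.rel S t ∨ ⟨S, X.col ∘ t⟩ ∈ T
  col := X.col

theorem introduce_rel_iff (X : CStruc σ) (R : σ.symbols) (c : Fin (σ.ar R) → ℕ)
    (S : σ.symbols) (t : Fin (σ.ar S) → X.carrier) :
    (X.introduce R c).rel S t ↔
      X.rel S t ∨ (⟨S, X.col ∘ t⟩ : (R : σ.symbols) × (Fin (σ.ar R) → ℕ)) = ⟨R, c⟩ := by
  refine or_congr_right ⟨?_, fun h => ?_⟩
  · rintro ⟨rfl, h⟩
    exact congrArg _ (funext h)
  · obtain ⟨rfl, h⟩ := Sigma.mk.inj_iff.mp h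
    exact ⟨rfl, congrFun (eq_of_heq h)⟩

def discrete (α : Type) (c : α → ℕ) : CStruc σ := ⟨α, fun _ _ => False, c⟩

def activeSet (A : CStruc σ) : Set σ.symbols := {R | 0 < σ.ar R ∧ ∃ t, A.rel R t}

end CStruc

namespace UCW

variable {k : ℕ}

theorem of_rel_iff {X : CStruc σ} (hX : UCW σ k X)
    {rel : ∀ R : σ.symbols, (Fin (σ.ar R) → X.carrier) → Prop} (h : ∀ R t, X.rel R t ↔ rel R t) :
    UCW σ k ⟨X.carrier, rel, X.col⟩ :=
  .iso (A := X) ⟨.refl _, h, fun _ => rfl⟩ hX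

theorem introduceSet {X : CStruc σ} (hX : UCW σ k X)
    {T : Set ((R : σ.symbols) × (Fin (σ.ar R) → ℕ))} (hT : T.Finite)
    (hc : ∀ p ∈ T, ∀ i, p.2 i < k) : UCW σ k (X.introduceSet T) := by
  induction T, hT using Set.Finite.induction_on with
  | empty =>
    exact hX.of_rel_iff fun R t => by simp
  | @insert p T _ _ ih =>
    refine ((ih fun q hq => hc q (.inr hq)).introduce p.1 p.2 (hc p (.inl rfl))).of_rel_iff
      fun R t => ?_
    refine (CStruc.introduce_rel_iff (X.introduceSet T) p.1 p.2 R t).trans ?_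
    change (X.rel R t ∨ _ ∈ T) ∨ _ = p ↔ X.rel R t ∨ _ ∈ insert p T
    rw [Set.mem_insert_iff]
    tauto

theorem discrete (hk : 0 < k) (α : Type) [Finite α] (c : α → ℕ) (hc : ∀ a, c a < k) :
    UCW σ k (CStruc.discrete α c) := by
  revert c
  refine Finite.induction_empty_option
    (P := fun α => ∀ c : α → ℕ, (∀ a, c a < k) → UCW σ k (CStruc.discrete α c)) ?_ ?_ ?_ α
  · intro α β e h c hc
    exact .iso ⟨e, fun _ _ => Iff.rfl, fun _ => rfl⟩ (h (c ∘ e) fun a => hc (e a))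
  · exact fun c _ => .empty _ (inferInstanceAs (IsEmpty PEmpty))
  · intro α _ h c hc
    have hpt : UCW σ k (CStruc.discrete PUnit fun _ => 0) :=
      .single hk _ (fun _ _ => rfl) ⟨⟨⟩⟩ (fun _ _ h => h) fun _ => rfl
    refine .iso ⟨(Equiv.optionEquivSumPUnit α).symm, fun R t => ?_, ?_⟩
      ((h (c ∘ some) fun a => hc _).union (hpt.recolor (fun _ => c none) fun _ _ => hc none))
    · simp [CStruc.union, CStruc.recolor, CStruc.discrete]
    · rintro (a | ⟨⟩) <;> rfl

theorem finite_activeSet {A : CStruc σ} (h : UCW σ k A) : A.activeSet.Finite := by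
  induction h with
  | empty A hA => exact Set.finite_empty.subset fun R ⟨hR, t, _⟩ => hA.false (t ⟨0, hR⟩)
  | single _ A _ _ hrel _ => exact Set.finite_empty.subset fun R ⟨_, t, ht⟩ => hrel R t ht
  | union _ _ ihA ihB =>
    exact (ihA.union ihB).subset fun R ⟨hR, t, ht⟩ =>
      ht.imp (fun ⟨s, _, hs⟩ => ⟨hR, s, hs⟩) fun ⟨s, _, hs⟩ => ⟨hR, s, hs⟩
  | recolor _ _ _ ih => exact ih
  | introduce R _ _ _ ih =>
    exact (ih.insert R).subset fun S ⟨hS, t, ht⟩ =>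
      ht.elim (fun h => .inr ⟨hS, t, h⟩) fun ⟨h, _⟩ => .inl h
  | iso e _ ih =>
    exact ih.subset fun R ⟨hR, t, ht⟩ =>
      ⟨hR, e.toEquiv.symm ∘ t, (e.rel_iff R _).mpr (by simpa using ht)⟩

end UCW

theorem ucw_eq_zero_of_not_finite_activeSet {A : CStruc σ} (h : ¬ A.activeSet.Finite) :
    ucw A = 0 := by
  rw [ucw, Nat.sInf_eq_zero]
  exact .inr (Set.eq_empty_of_forall_notMem fun k hk => h (UCW.finite_activeSet hk))

namespace PathDecomp

section

variable {V : Type} {G : SimpleGraph V} {n : ℕ} (P : PathDecomp G n)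

def bagNat (j : ℕ) : Set V := if h : j < n then P.bag ⟨j, h⟩ else ∅

theorem lt_of_mem_bagNat {v : V} {j : ℕ} (h : v ∈ P.bagNat j) : j < n := by
  by_contra hj
  simp [bagNat, hj] at h

theorem mem_bagNat_iff {v : V} (i : Fin n) : v ∈ P.bagNat i ↔ v ∈ P.bag i := by
  simp [bagNat]

theorem exists_mem_bagNat (v : V) : ∃ j, v ∈ P.bagNat j :=
  let ⟨i, hi⟩ := P.mem_bag v
  ⟨i, (P.mem_bagNat_iff i).2 hi⟩

theorem exists_mem_bagNat_of_adj {u v : V} (h : G.Adj u v) :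
    ∃ j, u ∈ P.bagNat j ∧ v ∈ P.bagNat j :=
  let ⟨i, hu, hv⟩ := P.mem_edge u v h
  ⟨i, (P.mem_bagNat_iff i).2 hu, (P.mem_bagNat_iff i).2 hv⟩

theorem mem_bagNat_of_le_of_le {v : V} {i j m : ℕ} (him : i ≤ m) (hmj : m ≤ j)
    (hi : v ∈ P.bagNat i) (hj : v ∈ P.bagNat j) : v ∈ P.bagNat m := by
  have hjn := P.lt_of_mem_bagNat hj
  lift i to Fin n using by omega
  lift j to Fin n using hjn
  lift m to Fin n using by omega
  rw [mem_bagNat_iff] at *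
  exact P.interval v i j m him hmj hi hj

/-- Helly property of intervals: the bag where the last of the `u a` makes its first appearance
contains all of them. -/
theorem exists_forall_mem_bagNat {ι : Type*} [Finite ι] [Nonempty ι] (u : ι → V)
    (hu : ∀ a b, u a ≠ u b → G.Adj (u a) (u b)) : ∃ j < n, ∀ a, u a ∈ P.bagNat j := by
  classical
  let first (v : V) : ℕ := Nat.find (P.exists_mem_bagNat v)
  obtain ⟨b, hb⟩ := Finite.exists_max (first ∘ u)
  have hfirst (v : V) : v ∈ P.bagNat (first v) := Nat.find_spec (P.exists_mem_bagNat v)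
  refine ⟨first (u b), P.lt_of_mem_bagNat (hfirst (u b)), fun a => ?_⟩
  by_cases hab : u a = u b
  · exact hab ▸ hfirst (u b)
  obtain ⟨j, ha, hb'⟩ := P.exists_mem_bagNat_of_adj (hu a b hab)
  exact P.mem_bagNat_of_le_of_le (hb a) (Nat.find_min' _ hb') (hfirst (u a)) ha

def bagsBelow (i : ℕ) : Set V := {v | ∃ j < i, v ∈ P.bagNat j}

theorem bagsBelow_succ (i : ℕ) : P.bagsBelow (i + 1) = P.bagsBelow i ∪ P.bagNat i := by
  ext v
  simp only [bagsBelow, Set.mem_ofPred_eq, Set.mem_union, Nat.lt_succ_iff_lt_or_eq, or_and_right,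
    exists_or, exists_eq_left]

open Classical in
noncomputable def stageEquiv (i : ℕ) :
    (P.bagsBelow i ⊕ ↥(P.bagNat i \ P.bagsBelow i)) ≃ P.bagsBelow (i + 1) :=
  (Equiv.Set.union Set.disjoint_sdiff_right).symm.trans
    (Equiv.setCongr (by rw [Set.union_sdiff_self, bagsBelow_succ]))

theorem stageEquiv_inl {i : ℕ} (a : P.bagsBelow i) : (P.stageEquiv i (.inl a) : V) = a := by
  simp [stageEquiv]

theorem stageEquiv_inr {i : ℕ} (b : ↥(P.bagNat i \ P.bagsBelow i)) :
    (P.stageEquiv i (.inr b) : V) = b := by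
  simp [stageEquiv]

theorem exists_eq_inl_of_stageEquiv_mem {i : ℕ} {x : P.bagsBelow i ⊕ ↥(P.bagNat i \ P.bagsBelow i)}
    (hx : (P.stageEquiv i x : V) ∈ P.bagsBelow i) : ∃ a, x = .inl a := by
  rcases x with a | b
  · exact ⟨a, rfl⟩
  · exact absurd (P.stageEquiv_inr b ▸ hx) b.2.2

theorem mem_bagsBelow_length (v : V) : v ∈ P.bagsBelow n :=
  let ⟨j, hj⟩ := P.exists_mem_bagNat v
  ⟨j, P.lt_of_mem_bagNat hj, hj⟩

theorem notMem_bagNat_succ {v : V} {i : ℕ} (hv : v ∈ P.bagsBelow i) (hvi : v ∉ P.bagNat i) :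
    v ∉ P.bagNat (i + 1) := fun hv' =>
  let ⟨_, hj, hvj⟩ := hv
  hvi (P.mem_bagNat_of_le_of_le (by omega) (by omega) hvj hv')

variable [Finite V]

open Classical in
noncomputable def bagColour (j : ℕ) (v : V) : ℕ :=
  if h : v ∈ P.bagNat j then Finite.equivFin (P.bagNat j) ⟨v, h⟩ + 1 else 0

theorem bagColour_eq_zero_iff {j : ℕ} {v : V} : P.bagColour j v = 0 ↔ v ∉ P.bagNat j := by
  unfold bagColour
  split_ifs with h <;> simp [h]

theorem bagColour_le {w : ℕ} (hP : ∀ i, (P.bag i).ncard ≤ w + 1) (j : ℕ) (v : V) :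
    P.bagColour j v ≤ w + 1 := by
  unfold bagColour
  split_ifs with h
  · have hcard : Nat.card (P.bagNat j) ≤ w + 1 := by
      rw [Nat.card_coe_set_eq, bagNat, dif_pos (P.lt_of_mem_bagNat h)]
      exact hP _
    have := (Finite.equivFin (P.bagNat j) ⟨v, h⟩).isLt
    omega
  · omega

theorem eq_of_bagColour_eq {j : ℕ} {u v : V} (hu : u ∈ P.bagNat j)
    (h : P.bagColour j u = P.bagColour j v) : u = v := by
  have hv : v ∈ P.bagNat j := by
    by_contra hv
    exact P.bagColour_eq_zero_iff.mp (h.trans (P.bagColour_eq_zero_iff.mpr hv)) hu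
  simp only [bagColour, dif_pos hu, dif_pos hv, add_left_inj, Fin.val_inj,
    (Finite.equivFin _).apply_eq_iff_eq, Subtype.mk.injEq] at h
  exact h

open Classical in
noncomputable def shiftColour (i c : ℕ) : ℕ :=
  if h : ∃ v ∈ P.bagNat i, P.bagColour i v = c then P.bagColour (i + 1) h.choose else 0

theorem shiftColour_le {w : ℕ} (hP : ∀ i, (P.bag i).ncard ≤ w + 1) (i c : ℕ) :
    P.shiftColour i c ≤ w + 1 := by
  unfold shiftColour
  split_ifs
  exacts [P.bagColour_le hP _ _, by omega]

theorem shiftColour_bagColour {i : ℕ} {v : V} (hv : v ∈ P.bagsBelow (i + 1)) :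
    P.shiftColour i (P.bagColour i v) = P.bagColour (i + 1) v := by
  by_cases hvi : v ∈ P.bagNat i
  · have h : ∃ v' ∈ P.bagNat i, P.bagColour i v' = P.bagColour i v := ⟨v, hvi, rfl⟩
    rw [shiftColour, dif_pos h, P.eq_of_bagColour_eq h.choose_spec.1 h.choose_spec.2]
  · have hv : v ∈ P.bagsBelow i := by
      rw [bagsBelow_succ] at hv
      exact hv.resolve_right hvi
    have h : ¬ ∃ v' ∈ P.bagNat i, P.bagColour i v' = P.bagColour i v := fun ⟨v', hv', h⟩ =>
      hvi (P.eq_of_bagColour_eq hv' h ▸ hv')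
    rw [shiftColour, dif_neg h, eq_comm, bagColour_eq_zero_iff]
    exact P.notMem_bagNat_succ hv hvi

end

section

variable {A : CStruc σ} {n : ℕ} (P : PathDecomp A.gaifman n)

theorem exists_forall_mem_bagNat_of_rel {R : σ.symbols} {u : Fin (σ.ar R) → A.carrier}
    (hu : A.rel R u) (hR : 0 < σ.ar R) : ∃ j < n, ∀ m, u m ∈ P.bagNat j :=
  have : Nonempty (Fin (σ.ar R)) := ⟨⟨0, hR⟩⟩
  P.exists_forall_mem_bagNat u fun a b hab => ⟨hab, R, u, hu, ⟨a, rfl⟩, ⟨b, rfl⟩⟩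

variable [Finite A.carrier]

/-- The nullary facts of `A` are present from stage `0` on: the empty structure may carry any of
them. -/
noncomputable def stage (i : ℕ) : CStruc σ where
  carrier := P.bagsBelow i
  rel R t := A.rel R (Subtype.val ∘ t) ∧
    (σ.ar R = 0 ∨ ∃ j < i, ∀ m, (t m : A.carrier) ∈ P.bagNat j)
  col v := P.bagColour i v

noncomputable def newVertices (i : ℕ) : CStruc σ :=
  .discrete ↥(P.bagNat i \ P.bagsBelow i) fun v => P.bagColour i v

noncomputable def bagPatterns (i : ℕ) : Set ((R : σ.symbols) × (Fin (σ.ar R) → ℕ)) :=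
  {p | ∃ u, A.rel p.1 u ∧ 0 < σ.ar p.1 ∧ (∀ m, u m ∈ P.bagNat i) ∧ P.bagColour i ∘ u = p.2}

theorem finite_bagPatterns (hA : A.activeSet.Finite) (i : ℕ) : (P.bagPatterns i).Finite := by
  refine ((hA.biUnion fun R _ => Set.finite_range (Sigma.mk R)).image
    fun q : (R : σ.symbols) × (Fin (σ.ar R) → A.carrier) =>
      (⟨q.1, P.bagColour i ∘ q.2⟩ : (R : σ.symbols) × (Fin (σ.ar R) → ℕ))).subset ?_
  rintro p ⟨u, hu, hR, -, hc⟩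
  exact ⟨⟨p.1, u⟩, Set.mem_biUnion ⟨hR, u, hu⟩ ⟨u, rfl⟩, Sigma.ext rfl (heq_of_eq hc)⟩

theorem mem_bagPatterns_iff {i : ℕ} {R : σ.symbols} {c : Fin (σ.ar R) → ℕ}
    {u : Fin (σ.ar R) → A.carrier} (hcu : c = P.bagColour i ∘ u) :
    ⟨R, c⟩ ∈ P.bagPatterns i ↔ A.rel R u ∧ 0 < σ.ar R ∧ ∀ m, u m ∈ P.bagNat i := by
  subst hcu
  refine ⟨fun ⟨u', hu', hR, hu'i, hc⟩ => ?_, fun ⟨hu, hR, hui⟩ => ⟨u, hu, hR, hui, rfl⟩⟩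
  have : u' = u := funext fun m => P.eq_of_bagColour_eq (hu'i m) (congrFun hc m)
  exact this ▸ ⟨hu', hR, hu'i⟩

theorem stage_union_newVertices_col {i : ℕ} (x : ((P.stage i).union (P.newVertices i)).carrier) :
    ((P.stage i).union (P.newVertices i)).col x = P.bagColour i (P.stageEquiv i x) := by
  cases x with
  | inl a => exact congrArg (P.bagColour i) (P.stageEquiv_inl a).symm
  | inr b => exact congrArg (P.bagColour i) (P.stageEquiv_inr b).symm

theorem stage_union_newVertices_rel_iff {i : ℕ} {R : σ.symbols}
    (t : Fin (σ.ar R) → ((P.stage i).union (P.newVertices i)).carrier) :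
    ((P.stage i).union (P.newVertices i)).rel R t ↔
      A.rel R (Subtype.val ∘ P.stageEquiv i ∘ t) ∧
        (σ.ar R = 0 ∨ ∃ j < i, ∀ m, (Subtype.val ∘ P.stageEquiv i ∘ t) m ∈ P.bagNat j) := by
  have hval {s : Fin (σ.ar R) → P.bagsBelow i} (hs : ∀ m, t m = .inl (s m)) :
      Subtype.val ∘ P.stageEquiv i ∘ t = Subtype.val ∘ s :=
    funext fun m => by
      change (P.stageEquiv i (t m) : A.carrier) = s m
      rw [hs m]
      exact P.stageEquiv_inl (s m)
  constructor
  · rintro (⟨s, hs, hrel, hfit⟩ | ⟨s, -, ⟨⟩⟩)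
    rw [hval hs]
    exact ⟨hrel, hfit⟩
  · rintro ⟨hrel, hfit⟩
    have hbelow (m : Fin (σ.ar R)) : (P.stageEquiv i (t m) : A.carrier) ∈ P.bagsBelow i := by
      rcases hfit with hR | ⟨j, hj, hfit⟩
      exacts [absurd m.isLt (by omega), ⟨j, hj, hfit m⟩]
    choose s hs using fun m => P.exists_eq_inl_of_stageEquiv_mem (hbelow m)
    rw [hval hs] at hrel hfit
    exact .inl ⟨s, hs, hrel, hfit⟩

noncomputable def step (i : ℕ) : CStruc σ :=
  (((P.stage i).union (P.newVertices i)).introduceSet (P.bagPatterns i)).recolor (P.shiftColour i)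

theorem UCW_step {w : ℕ} (hP : ∀ i, (P.bag i).ncard ≤ w + 1) (hA : A.activeSet.Finite) {i : ℕ}
    (hi : UCW σ (w + 2) (P.stage i)) : UCW σ (w + 2) (P.step i) := by
  have hcol (v : A.carrier) : P.bagColour i v < w + 2 := Nat.lt_succ_of_le (P.bagColour_le hP i v)
  have hnew : UCW σ (w + 2) (P.newVertices i) := .discrete (by omega) _ _ fun v => hcol v
  exact ((hi.union hnew).introduceSet
    (P.finite_bagPatterns hA i) fun p ⟨u, _, _, _, hc⟩ m => hc ▸ hcol (u m)).recolor _
    fun c _ => Nat.lt_succ_of_le (P.shiftColour_le hP i c)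

theorem step_rel_iff {i : ℕ} {R : σ.symbols} (t : Fin (σ.ar R) → (P.step i).carrier) :
    (P.step i).rel R t ↔ (P.stage (i + 1)).rel R (P.stageEquiv i ∘ t) := by
  have hcol : ((P.stage i).union (P.newVertices i)).col ∘ t =
      P.bagColour i ∘ (Subtype.val ∘ P.stageEquiv i ∘ t) :=
    funext fun m => P.stage_union_newVertices_col (t m)
  refine (or_congr (P.stage_union_newVertices_rel_iff t) (P.mem_bagPatterns_iff hcol)).trans ?_
  change _ ↔ A.rel R (Subtype.val ∘ P.stageEquiv i ∘ t) ∧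
    (σ.ar R = 0 ∨ ∃ j < i + 1, ∀ m, (Subtype.val ∘ P.stageEquiv i ∘ t) m ∈ P.bagNat j)
  generalize Subtype.val ∘ P.stageEquiv i ∘ t = u
  simp only [Nat.lt_succ_iff_lt_or_eq, or_and_right, exists_or, exists_eq_left,
    Nat.pos_iff_ne_zero]
  generalize (∃ j < i, ∀ m, u m ∈ P.bagNat j) = E
  tauto

noncomputable def stepIso (i : ℕ) : CIso (P.step i) (P.stage (i + 1)) where
  toEquiv := P.stageEquiv i
  rel_iff _ t := P.step_rel_iff t
  col_eq x := ((congrArg (P.shiftColour i) (P.stage_union_newVertices_col x)).trans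
    (P.shiftColour_bagColour (P.stageEquiv i x).2)).symm

theorem UCW_stage {w : ℕ} (hP : ∀ i, (P.bag i).ncard ≤ w + 1) (hA : A.activeSet.Finite)
    (i : ℕ) : UCW σ (w + 2) (P.stage i) := by
  induction i with
  | zero => exact .empty _ ⟨fun ⟨_, _, hj, _⟩ => by omega⟩
  | succ i ih => exact .iso (P.stepIso i) (P.UCW_step hP hA ih)

noncomputable def stageLengthIso (h0 : ∀ a, A.col a = 0) : CIso (P.stage n) A where
  toEquiv := Equiv.subtypeUnivEquiv P.mem_bagsBelow_length
  rel_iff R t := by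
    refine ⟨And.left, fun h => ⟨h, ?_⟩⟩
    rcases Nat.eq_zero_or_pos (σ.ar R) with hR | hR
    exacts [.inl hR, .inr (P.exists_forall_mem_bagNat_of_rel h hR)]
  col_eq v := by
    rw [h0]
    exact (P.bagColour_eq_zero_iff.mpr fun hv => (P.lt_of_mem_bagNat hv).false).symm

end

end PathDecomp

theorem pwLe_natCard {V : Type} [Finite V] (G : SimpleGraph V) : pwLe G (Nat.card V) :=
  ⟨1, ⟨fun _ => Set.univ, fun _ => ⟨0, trivial⟩, fun _ _ _ => ⟨0, trivial, trivial⟩,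
    fun _ _ _ _ _ _ _ _ => trivial⟩, fun _ => by rw [Set.ncard_univ]; omega⟩

theorem pwLe_pw {V : Type} [Finite V] (G : SimpleGraph V) : pwLe G (pw G) :=
  Nat.sInf_mem (s := {w | pwLe G w}) ⟨_, pwLe_natCard G⟩

/-- every 1-coloured structure A satisfies ucw(A) ≤ pw(G_A) + 2. -/
theorem stmt1 {σ : Signature} (A : CStruc σ) [Finite A.carrier]
    (h0 : ∀ a, A.col a = 0) :
    ucw A ≤ pw A.gaifman + 2 := by
  by_cases hA : A.activeSet.Finite
  · obtain ⟨n, P, hP⟩ := pwLe_pw A.gaifman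
    exact Nat.sInf_le (.iso (P.stageLengthIso h0) (P.UCW_stage hP hA n))
  · -- `A` lies in no `UCW σ k`, and `ucw A` takes the junk value `sInf ∅ = 0`.
    rw [ucw_eq_zero_of_not_finite_activeSet hA]
    exact Nat.zero_le _
end

section
/- Every relational structure A satisfies ucwf(A) ≤ tw(G_A) + 2, where ucwf is unary clique-width with fusion and tw is the tree-width of the Gaifman graph. -/
/-- The equivalence relation identifying all elements of colour `c`. -/
def fuseSetoid {σ : Signature} (A : CStruc σ) (c : ℕ) : Setoid A.carrier where
  r a b := a = b ∨ (A.col a = c ∧ A.col b = c)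
  iseqv := by
    constructor
    · intro a; exact Or.inl rfl
    · rintro a b (rfl | ⟨h1, h2⟩)
      · exact Or.inl rfl
      · exact Or.inr ⟨h2, h1⟩
    · rintro a b d (rfl | ⟨h1, h2⟩) (rfl | ⟨h3, h4⟩)
      · exact Or.inl rfl
      · exact Or.inr ⟨h3, h4⟩
      · exact Or.inr ⟨h1, h2⟩
      · exact Or.inr ⟨h1, h4⟩

/-- Fusion of all elements of colour `c`: the quotient structure, with
relations induced existentially and the induced colouring. -/
def CStruc.fuse {σ : Signature} (A : CStruc σ) (c : ℕ) : CStruc σ where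
  carrier := Quotient (fuseSetoid A c)
  rel R t := ∃ u : Fin (σ.ar R) → A.carrier,
    (∀ i, Quotient.mk (fuseSetoid A c) (u i) = t i) ∧ A.rel R u
  col := Quotient.lift A.col (by
    rintro a b (rfl | ⟨h1, h2⟩)
    · rfl
    · rw [h1, h2])

/-- The class UCWF_k[σ]: like UCW_k[σ] but additionally closed under fusion
of all elements of a colour `c < k`. -/
inductive UCWF (σ : Signature) (k : ℕ) : CStruc σ → Prop where
  | empty (A : CStruc σ) (h : IsEmpty A.carrier) : UCWF σ k A
  | single (hk : 0 < k) (A : CStruc σ) (hsub : ∀ a b : A.carrier, a = b)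
      (hne : Nonempty A.carrier)
      (hrel : ∀ (R : σ.symbols) (t : Fin (σ.ar R) → A.carrier), ¬ A.rel R t)
      (hcol : ∀ a, A.col a = 0) : UCWF σ k A
  | union {A B : CStruc σ} : UCWF σ k A → UCWF σ k B → UCWF σ k (A.union B)
  | recolor {A : CStruc σ} (f : ℕ → ℕ) (hf : ∀ i, i < k → f i < k) :
      UCWF σ k A → UCWF σ k (A.recolor f)
  | introduce {A : CStruc σ} (R : σ.symbols) (c : Fin (σ.ar R) → ℕ)
      (hc : ∀ i, c i < k) : UCWF σ k A → UCWF σ k (A.introduce R c)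
  | fuse {A : CStruc σ} (c : ℕ) (hc : c < k) : UCWF σ k A → UCWF σ k (A.fuse c)
  | iso {A B : CStruc σ} (e : CIso A B) : UCWF σ k A → UCWF σ k B

/-- Unary clique-width with fusion. -/
noncomputable def ucwf {σ : Signature} (A : CStruc σ) : ℕ := sInf {k | UCWF σ k A}

/-- A tree decomposition of `G` over an index graph `T` (intended to be a tree). -/
structure TreeDecomp {V ι : Type} (G : SimpleGraph V) (T : SimpleGraph ι) where
  bag : ι → Set V
  mem_bag : ∀ v, ∃ i, v ∈ bag i
  mem_edge : ∀ u v, G.Adj u v → ∃ i, u ∈ bag i ∧ v ∈ bag i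
  subtree : ∀ v : V, (T.induce {i | v ∈ bag i}).Connected

/-- `G` has tree-width at most `w`. -/
def twLe {V : Type} (G : SimpleGraph V) (w : ℕ) : Prop :=
  ∃ (ι : Type) (T : SimpleGraph ι), T.IsTree ∧
    ∃ D : TreeDecomp G T, ∀ i, (D.bag i).ncard ≤ w + 1

/-- The tree-width of `G`. -/
noncomputable def tw {V : Type} (G : SimpleGraph V) : ℕ := sInf {w | twLe G w}

/-!
Fix a tree decomposition of width `w`. By induction we build the substructure induced on a
set `U` in which some vertices of one bag carry distinct colours among `1, …, w + 1` and all
other vertices carry colour `0`. If `U` fits into that bag, it is assembled point by point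
with pairwise distinct colours, its facts are introduced colour tuple by colour tuple, and it
is recoloured. Otherwise a tree edge `ab` pointing towards a vertex outside the bag at `a`
splits `U` into the vertices seen on either side. The two sides meet only inside the bags at
`a` and `b`, and no fact crosses between them, so both sides are built recursively with the
shared vertices labelled by fresh colours, their disjoint union is fused along these
colours, and the labels no longer needed are reset to `0`. If one side already contains all
of `U`, the root moves across the edge instead, which strictly decreases the total distance
from the root to the bags of the vertices of `U`.

A structure with infinitely many symbols of positive arity carrying facts lies in no
`UCWF σ k`, so its `ucwf` is the junk value `sInf ∅ = 0`.
-/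

namespace CStruc

variable {σ : Signature}

def posFactSymbols (A : CStruc σ) : Set σ.symbols :=
  {R | 0 < σ.ar R ∧ ∃ t, A.rel R t}

def induce (A : CStruc σ) (U : Set A.carrier) (χ : A.carrier → ℕ) : CStruc σ where
  carrier := U
  rel R t := A.rel R fun i => (t i : A.carrier)
  col x := χ x

/-- Nullary facts are kept because the empty structure the construction starts from already
carries them. -/
def withFacts (A : CStruc σ) (F : Set ((R : σ.symbols) × (Fin (σ.ar R) → A.carrier))) :
    CStruc σ where
  carrier := A.carrier
  rel R t := (σ.ar R = 0 ∧ A.rel R t) ∨ ⟨R, t⟩ ∈ F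
  col := A.col

lemma rel_of_ar_eq_zero (A : CStruc σ) {R : σ.symbols} (hR : σ.ar R = 0)
    {t u : Fin (σ.ar R) → A.carrier} (h : A.rel R t) : A.rel R u := by
  rwa [show u = t from funext fun i => absurd i.2 (by omega)]

lemma forall_mem_or_forall_mem_of_rel {A : CStruc σ} {U₀ U₁ : Set A.carrier}
    (hsep : ∀ u ∈ U₀ \ U₁, ∀ v ∈ U₁ \ U₀, ¬ A.gaifman.Adj u v)
    {R : σ.symbols} {t : Fin (σ.ar R) → A.carrier} (hR : A.rel R t) (ht : ∀ i, t i ∈ U₀ ∪ U₁) :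
    (∀ i, t i ∈ U₀) ∨ (∀ i, t i ∈ U₁) := by
  by_contra! ⟨⟨i, hi⟩, ⟨j, hj⟩⟩
  have hi₁ : t i ∈ U₁ := (ht i).resolve_left hi
  have hj₀ : t j ∈ U₀ := (ht j).resolve_right hj
  exact hsep (t j) ⟨hj₀, hj⟩ (t i) ⟨hi₁, hi⟩
    ⟨fun h => hi (h ▸ hj₀), R, t, hR, ⟨j, rfl⟩, ⟨i, rfl⟩⟩

end CStruc

open CStruc

namespace UCWF

variable {σ : Signature} {k : ℕ} {A : CStruc σ}

theorem posFactSymbols_finite (h : UCWF σ k A) : A.posFactSymbols.Finite := by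
  induction h with
  | empty A h =>
    refine Set.finite_empty.subset fun R ⟨hR, t, _⟩ => ?_
    exact h.false (t ⟨0, hR⟩)
  | single _ A _ _ hrel _ =>
    exact Set.finite_empty.subset fun R ⟨_, t, ht⟩ => hrel R t ht
  | union _ _ ih₀ ih₁ =>
    refine (ih₀.union ih₁).subset ?_
    rintro R ⟨hR, t, ⟨s, -, hs⟩ | ⟨s, -, hs⟩⟩
    exacts [Or.inl ⟨hR, s, hs⟩, Or.inr ⟨hR, s, hs⟩]
  | recolor _ _ _ ih => exact ih
  | introduce R _ _ _ ih =>
    refine (ih.insert R).subset ?_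
    rintro S ⟨hS, t, ht | ⟨rfl, -⟩⟩
    exacts [Or.inr ⟨hS, t, ht⟩, Or.inl rfl]
  | fuse _ _ _ ih =>
    exact ih.subset fun R ⟨hR, _, u, _, hu⟩ => ⟨hR, u, hu⟩
  | iso e _ ih =>
    refine ih.subset fun R ⟨hR, t, ht⟩ => ⟨hR, fun i => e.toEquiv.symm (t i), ?_⟩
    simpa [e.rel_iff] using ht

theorem point (hk : 0 < k) {c : ℕ} (hc : c < k) {P : CStruc σ} [Subsingleton P.carrier]
    [Nonempty P.carrier] (hrel : ∀ R t, ¬ P.rel R t) (hcol : ∀ a, P.col a = c) :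
    UCWF σ k P := by
  let P₀ : CStruc σ := ⟨P.carrier, P.rel, fun _ => 0⟩
  have h₀ : UCWF σ k P₀ :=
    single hk P₀ Subsingleton.elim ‹_› hrel fun _ => rfl
  exact iso (A := P₀.recolor fun _ => c) ⟨Equiv.refl _, fun _ _ => Iff.rfl, fun a => hcol a⟩
    (h₀.recolor (fun _ => c) fun _ _ => hc)

theorem induce_recolor {U : Set A.carrier} {ψ χ : A.carrier → ℕ}
    (h : UCWF σ k (A.induce U ψ)) (f : ℕ → ℕ) (hf : ∀ i, i < k → f i < k)
    (hfχ : ∀ x ∈ U, f (ψ x) = χ x) : UCWF σ k (A.induce U χ) :=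
  iso (A := (A.induce U ψ).recolor f)
    ⟨Equiv.refl _, fun _ _ => Iff.rfl, fun x => (hfχ x.1 x.2).symm⟩ (h.recolor f hf)

/-- `C` is `B` with all colours of `M` fused, presented through the quotient map `q`. -/
theorem of_quotient {M : Set ℕ} (hM : M.Finite) (hMk : ∀ c ∈ M, c < k) {B C : CStruc σ}
    (q : B.carrier → C.carrier) (hsurj : Function.Surjective q)
    (hker : ∀ x y, q x = q y ↔ x = y ∨ (B.col x = B.col y ∧ B.col x ∈ M))
    (hrel : ∀ R t, C.rel R t ↔ ∃ u, (∀ i, q (u i) = t i) ∧ B.rel R u)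
    (hcol : ∀ x, C.col (q x) = B.col x) (hB : UCWF σ k B) : UCWF σ k C := by
  induction M, hM using Set.Finite.induction_on generalizing B C with
  | empty =>
    have hinj : Function.Injective q := fun x y hxy => by simpa using (hker x y).1 hxy
    refine iso ⟨Equiv.ofBijective q ⟨hinj, hsurj⟩, fun R t => ?_, hcol⟩ hB
    refine ⟨fun h => (hrel R _).2 ⟨t, fun _ => rfl, h⟩, fun h => ?_⟩
    obtain ⟨u, hu, hR⟩ := (hrel R _).1 h
    rwa [show u = t from funext fun i => hinj (hu i)] at hR
  | @insert c M _ _ ih =>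
    have hq : ∀ x y, fuseSetoid B c x y → q x = q y := by
      rintro x y (rfl | ⟨hx, hy⟩)
      exacts [rfl, (hker x y).2 (Or.inr ⟨hx.trans hy.symm, hx ▸ M.mem_insert c⟩)]
    refine ih (fun d hd => hMk d (Set.mem_insert_of_mem c hd)) (Quotient.lift q hq) ?_ ?_ ?_
      (Quotient.ind hcol) (fuse c (hMk c (M.mem_insert c)) hB)
    · exact fun z => let ⟨x, hx⟩ := hsurj z; ⟨⟦x⟧, hx⟩
    · refine Quotient.ind₂ fun x y => ?_
      change q x = q y ↔
        (⟦x⟧ : Quotient (fuseSetoid B c)) = ⟦y⟧ ∨ (B.col x = B.col y ∧ B.col x ∈ M)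
      rw [hker, Quotient.eq]
      change _ ↔ (x = y ∨ B.col x = c ∧ B.col y = c) ∨ _
      simp only [Set.mem_insert_iff]
      constructor
      · rintro (h | ⟨hxy, hx | hx⟩)
        exacts [Or.inl (Or.inl h), Or.inl (Or.inr ⟨hx, hxy ▸ hx⟩), Or.inr ⟨hxy, hx⟩]
      · rintro ((h | ⟨hx, hy⟩) | ⟨hxy, hx⟩)
        exacts [Or.inl h, Or.inr ⟨hx.trans hy.symm, Or.inl hx⟩, Or.inr ⟨hxy, Or.inr hx⟩]
    · intro R t
      rw [hrel]
      constructor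
      · rintro ⟨u, hu, hR⟩
        exact ⟨fun i => ⟦u i⟧, hu, u, fun _ => rfl, hR⟩
      · rintro ⟨v, hv, u, hu, hR⟩
        exact ⟨u, fun i => by rw [← hv i, ← hu i]; rfl, hR⟩

theorem induce_withFacts_empty (hk : 0 < k) {U : Set A.carrier} (hU : U.Finite)
    {ψ : A.carrier → ℕ} (hψ : ∀ x ∈ U, ψ x < k) : UCWF σ k ((A.withFacts ∅).induce U ψ) := by
  classical
  induction U, hU using Set.Finite.induction_on with
  | empty => exact empty _ ⟨fun x => x.2⟩
  | @insert a U ha _ ih =>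
    have hpoint : UCWF σ k ⟨PUnit, fun _ _ => False, fun _ => ψ a⟩ :=
      point hk (hψ a (U.mem_insert a)) (fun _ _ h => h) fun _ => rfl
    refine iso ⟨(Equiv.Set.insert ha).symm, fun R t => ?_, ?_⟩
      ((ih fun x hx => hψ x (Set.mem_insert_of_mem a hx)).union hpoint)
    · change _ ↔ (σ.ar R = 0 ∧ _) ∨ _
      constructor
      · rintro (⟨s, -, ⟨hR, hs⟩ | h⟩ | ⟨s, -, h⟩)
        exacts [Or.inl ⟨hR, A.rel_of_ar_eq_zero hR hs⟩, absurd h (Set.notMem_empty _), h.elim]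
      · rintro (⟨hR, ht⟩ | h)
        · refine Or.inl ⟨fun i => absurd i.2 (by omega), fun i => absurd i.2 (by omega), ?_⟩
          exact Or.inl ⟨hR, A.rel_of_ar_eq_zero hR ht⟩
        · exact absurd h (Set.notMem_empty _)
    · rintro (x | ⟨⟩) <;> rfl

theorem induce_withFacts (hk : 0 < k) {U : Set A.carrier} (hU : U.Finite)
    {ψ : A.carrier → ℕ} (hψ : ∀ x ∈ U, ψ x < k) (hψinj : Set.InjOn ψ U)
    {F : Set ((R : σ.symbols) × (Fin (σ.ar R) → A.carrier))} (hF : F.Finite)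
    (hFU : ∀ p ∈ F, ∀ i, p.2 i ∈ U) : UCWF σ k ((A.withFacts F).induce U ψ) := by
  induction F, hF using Set.Finite.induction_on with
  | empty => exact induce_withFacts_empty hk hU hψ
  | @insert p F _ _ ih =>
    obtain ⟨P, v⟩ := p
    have hv : ∀ i, v i ∈ U := hFU _ (F.mem_insert _)
    have hnew : ∀ (R : σ.symbols) (t : Fin (σ.ar R) → U),
        (∃ h : R = P, ∀ i, ψ (t (Fin.cast (congrArg σ.ar h).symm i)) = ψ (v i)) ↔
          (⟨R, fun i => (t i : A.carrier)⟩ : (R : σ.symbols) × (Fin (σ.ar R) → A.carrier)) =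
            ⟨P, v⟩ := by
      rintro R t
      constructor
      · rintro ⟨rfl, h⟩
        exact congrArg (Sigma.mk R) (funext fun i => hψinj (t i).2 (hv i) (h i))
      · intro h
        obtain ⟨rfl, h⟩ := Sigma.mk.inj_iff.mp h
        exact ⟨rfl, fun i => congrArg ψ (congrFun (eq_of_heq h) i)⟩
    refine iso (A := ((A.withFacts F).induce U ψ).introduce P fun i => ψ (v i))
      ⟨Equiv.refl _, fun R t => ?_, fun _ => rfl⟩
      ((ih fun q hq => hFU q (Set.mem_insert_of_mem _ hq)).introduce P _ fun i => hψ _ (hv i))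
    constructor
    · rintro ((h | h) | h)
      exacts [Or.inl h, Or.inr (Or.inr h), Or.inr (Or.inl ((hnew R t).1 h))]
    · rintro (h | h | h)
      exacts [Or.inl (Or.inl h), Or.inr ((hnew R t).2 h), Or.inl (Or.inr h)]

theorem induce_of_injOn (hk : 0 < k) (hA : A.posFactSymbols.Finite) {U : Set A.carrier}
    (hU : U.Finite) {ψ : A.carrier → ℕ} (hψ : ∀ x ∈ U, ψ x < k) (hψinj : Set.InjOn ψ U) :
    UCWF σ k (A.induce U ψ) := by
  have : Finite U := hU.to_subtype
  let F : Set ((R : σ.symbols) × (Fin (σ.ar R) → A.carrier)) :=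
    {p | 0 < σ.ar p.1 ∧ A.rel p.1 p.2 ∧ ∀ i, p.2 i ∈ U}
  have hF : F ⊆ ⋃ R ∈ A.posFactSymbols, Set.range fun u : Fin (σ.ar R) → U =>
      (⟨R, fun i => (u i : A.carrier)⟩ : (R : σ.symbols) × (Fin (σ.ar R) → A.carrier)) := by
    rintro ⟨R, t⟩ ⟨hR, ht, htU⟩
    exact Set.mem_biUnion ⟨hR, t, ht⟩ ⟨fun i => ⟨t i, htU i⟩, rfl⟩
  refine iso (A := (A.withFacts F).induce U ψ) ⟨Equiv.refl U, fun R t => ?_, fun _ => rfl⟩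
    (induce_withFacts hk hU hψ hψinj
      ((hA.biUnion fun R _ => Set.finite_range _).subset hF) fun p hp => hp.2.2)
  change (σ.ar R = 0 ∧ _) ∨ (0 < σ.ar R ∧ _ ∧ _) ↔ A.rel R fun i => (t i).1
  exact ⟨fun h => h.elim And.right fun h => h.2.1,
    fun h => (Nat.eq_zero_or_pos _).imp (⟨·, h⟩) (⟨·, h, fun i => (t i).2⟩)⟩

theorem induce_of_ncard_le (hA : A.posFactSymbols.Finite) {U : Set A.carrier}
    (hU : U.Finite) (hUk : U.ncard < k) {χ : A.carrier → ℕ} (hχ : ∀ x ∈ U, χ x < k) :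
    UCWF σ k (A.induce U χ) := by
  classical
  obtain ⟨ψ, hψ, hψinj⟩ := hU.exists_injOn_of_encard_le (t := Set.Iio k) (by
    rw [← hU.cast_ncard_eq, ← (Set.finite_Iio k).cast_ncard_eq, Set.ncard_Iio_nat]
    exact_mod_cast hUk.le)
  have hpre : ∀ x ∈ U, ∃ y ∈ U, ψ y = ψ x := fun x hx => ⟨x, hx, rfl⟩
  refine (induce_of_injOn (by omega) hA hU hψ hψinj).induce_recolor
    (fun i => if h : ∃ y ∈ U, ψ y = i then χ h.choose else 0) (fun i _ => ?_) fun x hx => ?_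
  · split_ifs with h
    exacts [hχ _ h.choose_spec.1, by omega]
  · rw [dif_pos (hpre x hx)]
    obtain ⟨hyU, hy⟩ := (hpre x hx).choose_spec
    rw [hψinj hyU hx hy]
/-- Fusing the colours of `U₀ ∩ U₁`, which occur nowhere else, identifies the two copies of
each shared element; no fact is lost since no Gaifman edge joins `U₀ \ U₁` to `U₁ \ U₀`. -/
theorem induce_union {U₀ U₁ : Set A.carrier} {χ : A.carrier → ℕ}
    (hsep : ∀ u ∈ U₀ \ U₁, ∀ v ∈ U₁ \ U₀, ¬ A.gaifman.Adj u v)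
    (hI : (U₀ ∩ U₁).Finite) (hIk : ∀ x ∈ U₀ ∩ U₁, χ x < k)
    (hχ : ∀ x ∈ U₀ ∪ U₁, ∀ y ∈ U₀ ∩ U₁, χ x = χ y → x = y)
    (h₀ : UCWF σ k (A.induce U₀ χ)) (h₁ : UCWF σ k (A.induce U₁ χ)) :
    UCWF σ k (A.induce (U₀ ∪ U₁) χ) := by
  have hshared : ∀ a ∈ U₀ ∪ U₁, ∀ b ∈ U₀ ∪ U₁,
      χ a = χ b ∧ χ a ∈ χ '' (U₀ ∩ U₁) ↔ a = b ∧ a ∈ U₀ ∩ U₁ := by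
    refine fun a ha b hb =>
      ⟨fun ⟨hab, y, hy, hya⟩ => ?_, fun ⟨hab, haI⟩ => ⟨hab ▸ rfl, a, haI, rfl⟩⟩
    obtain rfl := hχ a ha y hy hya.symm
    exact ⟨(hχ b hb a hy hab.symm).symm, hy⟩
  let q : ((A.induce U₀ χ).union (A.induce U₁ χ)).carrier → ↥(U₀ ∪ U₁) :=
    Sum.elim (Set.inclusion Set.subset_union_left) (Set.inclusion Set.subset_union_right)
  have hcol : ∀ z, ((A.induce U₀ χ).union (A.induce U₁ χ)).col z = χ (q z) := by
    rintro (z | z) <;> rfl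
  have hcross : ∀ z z', q z = q z' → z = z' ∨ (q z).1 ∈ U₀ ∩ U₁ := by
    rintro (⟨a, ha⟩ | ⟨a, ha⟩) (⟨b, hb⟩ | ⟨b, hb⟩) h <;>
      obtain rfl : a = b := congrArg Subtype.val h
    exacts [Or.inl rfl, Or.inr ⟨ha, hb⟩, Or.inr ⟨hb, ha⟩, Or.inl rfl]
  refine of_quotient (hI.image χ) (fun _ ⟨x, hx, hxc⟩ => hxc ▸ hIk x hx) q ?_ (fun z z' => ?_)
    (fun R t => ?_) (fun z => (hcol z).symm) (h₀.union h₁)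
  · rintro ⟨x, hx | hx⟩
    exacts [⟨Sum.inl ⟨x, hx⟩, rfl⟩, ⟨Sum.inr ⟨x, hx⟩, rfl⟩]
  · rw [hcol, hcol, hshared _ (q z).2 _ (q z').2, ← Subtype.ext_iff]
    exact ⟨fun h => (hcross z z' h).imp id (⟨h, ·⟩), fun h => h.elim (congrArg q) And.left⟩
  · constructor
    · intro hR
      rcases CStruc.forall_mem_or_forall_mem_of_rel hsep hR fun i => (t i).2 with h | h
      · exact ⟨fun i => Sum.inl ⟨(t i).1, h i⟩, fun _ => rfl, Or.inl ⟨_, fun _ => rfl, hR⟩⟩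
      · exact ⟨fun i => Sum.inr ⟨(t i).1, h i⟩, fun _ => rfl, Or.inr ⟨_, fun _ => rfl, hR⟩⟩
    · rintro ⟨u, hu, ⟨s, hs, hR⟩ | ⟨s, hs, hR⟩⟩ <;>
      · have hts : (fun i => (t i).1) = fun i => (s i).1 :=
          funext fun i => by rw [← hu i, hs i]; rfl
        change A.rel R fun i => (t i).1
        rw [hts]
        exact hR

theorem induce_of_extend_labels {U I : Set A.carrier} {χ χ' : A.carrier → ℕ}
    (h : UCWF σ k (A.induce U χ')) (hsupp : U ∩ χ'.support = U ∩ χ.support ∪ I)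
    (hinj : Set.InjOn χ' (U ∩ χ.support ∪ I)) (hχ : Set.EqOn χ' χ (U ∩ χ.support)) :
    UCWF σ k (A.induce U χ) := by
  classical
  refine h.induce_recolor (fun c => if c ∈ χ '' (U ∩ χ.support) then c else 0)
    (fun c hc => by split_ifs <;> omega) fun x hx => ?_
  by_cases hxS : x ∈ U ∩ χ.support
  · rw [hχ hxS, if_pos ⟨x, hxS, rfl⟩]
  · have hχx : χ x = 0 := by simpa [hx] using hxS
    rw [hχx, if_neg]
    rintro ⟨y, hyS, hy⟩
    have hx' : x ∈ U ∩ χ'.support := ⟨hx, by rw [Function.mem_support, ← hy]; exact hyS.2⟩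
    exact hxS (hinj (Or.inl hyS) (hsupp ▸ hx') ((hχ hyS).trans hy) ▸ hyS)

end UCWF

theorem Set.exists_extend_injOn {α β : Type*} [Nonempty β] {S T : Set α} {Y : Set β}
    (hST : S ⊆ T) (hT : T.Finite) (hY : Y.Finite) (hcard : T.ncard ≤ Y.ncard) {f : α → β}
    (hf : Set.InjOn f S) (hfY : Set.MapsTo f S Y) :
    ∃ g : α → β, Set.EqOn g f S ∧ Set.InjOn g T ∧ Set.MapsTo g T Y := by
  classical
  have hle : (T \ S).encard ≤ (Y \ f '' S).encard := by
    have hT' := Set.encard_sdiff_add_encard_of_subset hST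
    have hY' := Set.encard_sdiff_add_encard_of_subset (Set.mapsTo_iff_image_subset.1 hfY)
    rw [hf.encard_image] at hY'
    have hTY : T.encard ≤ Y.encard := by
      rw [← hT.cast_ncard_eq, ← hY.cast_ncard_eq]
      exact_mod_cast hcard
    rw [← hT', ← hY'] at hTY
    exact (ENat.add_le_add_iff_right (hT.subset hST).encard_lt_top.ne).1 hTY
  obtain ⟨h, hhY, hh⟩ := hT.sdiff.exists_injOn_of_encard_le hle
  have hgS : Set.EqOn (S.piecewise f h) f S := S.piecewise_eqOn f h
  have hgT : Set.EqOn (S.piecewise f h) h (T \ S) := fun x hx => S.piecewise_eq_of_notMem f h hx.2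
  refine ⟨S.piecewise f h, hgS, ?_, fun x hx => ?_⟩
  · rw [← Set.union_sdiff_cancel hST, Set.injOn_union Set.disjoint_sdiff_right]
    refine ⟨hgS.injOn_iff.2 hf, hgT.injOn_iff.2 hh, fun x hx y hy hxy => ?_⟩
    rw [hgS hx, hgT hy] at hxy
    exact (hhY hy).2 ⟨x, hx, hxy⟩
  · by_cases hxS : x ∈ S
    · exact hgS hxS ▸ hfY hxS
    · exact hgT ⟨hx, hxS⟩ ▸ (hhY ⟨hx, hxS⟩).1

namespace SimpleGraph

variable {V : Type*} {G : SimpleGraph V} {a b j : V}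

theorem Reachable.reachable_deleteEdges_of_dist_lt (hj : G.Reachable j b)
    (h : G.dist j b < G.dist j a) : (G.deleteEdges {s(a, b)}).Reachable j b := by
  classical
  obtain ⟨p, hp⟩ := hj.exists_walk_length_eq_dist
  refine reachable_deleteEdges_iff_exists_walk.2 ⟨p, fun he => ?_⟩
  have hsupp := p.fst_mem_support_of_mem_edges he
  have := (dist_le (p.takeUntil a hsupp)).trans (p.length_takeUntil_le_length hsupp)
  omega

theorem Reachable.exists_adj_reachable_deleteEdges (h : G.Reachable a j) (hne : a ≠ j) :
    ∃ b, G.Adj a b ∧ (G.deleteEdges {s(a, b)}).Reachable b j := by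
  obtain ⟨p, hp⟩ := h.exists_walk_length_eq_dist
  cases p with
  | nil => exact absurd rfl hne
  | @cons _ b _ hadj q =>
    refine ⟨b, hadj, (Reachable.reachable_deleteEdges_of_dist_lt ⟨q.reverse⟩ ?_).symm⟩
    have := dist_le q.reverse
    rw [Walk.length_reverse, dist_comm] at this
    rw [dist_comm (u := j) (v := b), dist_comm (u := j) (v := a)]
    simp only [Walk.length_cons] at hp
    omega

theorem IsTree.not_reachable_deleteEdges (hG : G.IsTree) (hadj : G.Adj a b) :
    ¬ (G.deleteEdges {s(a, b)}).Reachable a b :=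
  isAcyclic_iff_forall_adj_isBridge.1 hG.isAcyclic hadj

theorem IsTree.reachable_deleteEdges_or (hG : G.IsTree) (hadj : G.Adj a b) (j : V) :
    (G.deleteEdges {s(a, b)}).Reachable j a ∨ (G.deleteEdges {s(a, b)}).Reachable j b := by
  rcases hG.dist_eq_dist_add_one_of_adj j hadj with h | h
  · exact Or.inr ((hG.connected.preconnected j b).reachable_deleteEdges_of_dist_lt (by omega))
  · rw [Sym2.eq_swap]
    exact Or.inl ((hG.connected.preconnected j a).reachable_deleteEdges_of_dist_lt (by omega))

theorem IsTree.dist_lt_of_reachable_deleteEdges (hG : G.IsTree) (hadj : G.Adj a b)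
    (hj : (G.deleteEdges {s(a, b)}).Reachable j b) : G.dist j b < G.dist j a := by
  rcases hG.dist_eq_dist_add_one_of_adj j hadj with h | h
  · omega
  · have hja : (G.deleteEdges {s(b, a)}).Reachable j a :=
      (hG.connected.preconnected j a).reachable_deleteEdges_of_dist_lt (by omega)
    rw [Sym2.eq_swap] at hja
    exact absurd (hja.symm.trans hj) (hG.not_reachable_deleteEdges hadj)

theorem IsTree.mem_edges_of_reachable_deleteEdges (hG : G.IsTree) (hadj : G.Adj a b) {x y : V}
    (hx : (G.deleteEdges {s(a, b)}).Reachable x a) (hy : (G.deleteEdges {s(a, b)}).Reachable y b)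
    (p : G.Walk x y) : s(a, b) ∈ p.edges :=
  p.mem_edges_of_not_reachable_deleteEdges fun h =>
    hG.not_reachable_deleteEdges hadj (hx.symm.trans (h.trans hy))

theorem Connected.exists_walk_support_subset_of_induce {S : Set V} (h : (G.induce S).Connected)
    (ha : a ∈ S) (hb : b ∈ S) : ∃ p : G.Walk a b, ∀ x ∈ p.support, x ∈ S := by
  obtain ⟨p⟩ := h.preconnected ⟨a, ha⟩ ⟨b, hb⟩
  refine ⟨p.map (⟨Subtype.val, id⟩ : G.induce S →g G), fun x hx => ?_⟩
  rw [Walk.support_map, List.mem_map] at hx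
  obtain ⟨y, -, rfl⟩ := hx
  exact y.2

end SimpleGraph

namespace TreeDecomp

open SimpleGraph

variable {V ι : Type} {G : SimpleGraph V} {T : SimpleGraph ι} (D : TreeDecomp G T)

def branch (e : Sym2 ι) (b : ι) : Set V :=
  {v | ∃ j, (T.deleteEdges {e}).Reachable j b ∧ v ∈ D.bag j}

variable {D} {a b : ι}

lemma bag_subset_branch (e : Sym2 ι) (b : ι) : D.bag b ⊆ D.branch e b :=
  fun _ hv => ⟨b, .refl b, hv⟩

lemma mem_branch_or (hT : T.IsTree) (hadj : T.Adj a b) (v : V) :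
    v ∈ D.branch s(a, b) a ∨ v ∈ D.branch s(a, b) b := by
  obtain ⟨j, hj⟩ := D.mem_bag v
  exact (hT.reachable_deleteEdges_or hadj j).imp (⟨j, ·, hj⟩) (⟨j, ·, hj⟩)

lemma branch_inter_branch_subset (hT : T.IsTree) (hadj : T.Adj a b) :
    D.branch s(a, b) a ∩ D.branch s(a, b) b ⊆ D.bag a ∩ D.bag b := by
  rintro v ⟨⟨j₀, hj₀, hv₀⟩, ⟨j₁, hj₁, hv₁⟩⟩
  obtain ⟨p, hp⟩ := (D.subtree v).exists_walk_support_subset_of_induce hv₀ hv₁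
  have he := hT.mem_edges_of_reachable_deleteEdges hadj hj₀ hj₁ p
  exact ⟨hp a (p.fst_mem_support_of_mem_edges he), hp b (p.snd_mem_support_of_mem_edges he)⟩

lemma not_adj_of_mem_branch (hT : T.IsTree) (hadj : T.Adj a b) {u v : V}
    (hu : u ∈ D.branch s(a, b) a \ D.branch s(a, b) b)
    (hv : v ∈ D.branch s(a, b) b \ D.branch s(a, b) a) : ¬ G.Adj u v := by
  intro huv
  obtain ⟨j, hju, hjv⟩ := D.mem_edge u v huv
  rcases hT.reachable_deleteEdges_or hadj j with hj | hj
  exacts [hv.2 ⟨j, hj, hjv⟩, hu.2 ⟨j, hj, hju⟩]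

variable (D)

noncomputable def bagDist (v : V) (i : ι) : ℕ :=
  sInf ((T.dist i ·) '' {j | v ∈ D.bag j})

noncomputable def potential [Finite V] (U : Set V) (i : ι) : ℕ :=
  ∑ v ∈ (Set.toFinite U).toFinset, D.bagDist v i

variable {D}

lemma bagDist_le {v : V} {j : ι} (hv : v ∈ D.bag j) (i : ι) : D.bagDist v i ≤ T.dist i j :=
  Nat.sInf_le ⟨j, hv, rfl⟩

lemma exists_dist_eq_bagDist (v : V) (i : ι) : ∃ j, v ∈ D.bag j ∧ T.dist i j = D.bagDist v i :=
  Nat.sInf_mem (Set.image_nonempty.2 (D.mem_bag v))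

lemma bagDist_lt (hT : T.IsTree) (hadj : T.Adj a b) {v : V} (hv : v ∈ D.branch s(a, b) b)
    (hva : v ∉ D.bag a) : D.bagDist v b < D.bagDist v a := by
  obtain ⟨j, hj, hja⟩ := exists_dist_eq_bagDist (D := D) v a
  have hjb : (T.deleteEdges {s(a, b)}).Reachable j b :=
    (hT.reachable_deleteEdges_or hadj j).resolve_left fun hj' =>
      hva (branch_inter_branch_subset hT hadj ⟨⟨j, hj', hj⟩, hv⟩).1
  have := hT.dist_lt_of_reachable_deleteEdges hadj hjb
  rw [dist_comm, ← dist_comm (u := a)] at this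
  exact (bagDist_le hj b).trans_lt (hja ▸ this)

lemma bagDist_le_of_mem_branch (hT : T.IsTree) (hadj : T.Adj a b) {v : V}
    (hv : v ∈ D.branch s(a, b) b) : D.bagDist v b ≤ D.bagDist v a := by
  by_cases hva : v ∈ D.bag a
  · have hvb := (branch_inter_branch_subset hT hadj ⟨bag_subset_branch _ a hva, hv⟩).2
    have := bagDist_le hvb b
    rw [dist_self] at this
    omega
  · exact (bagDist_lt hT hadj hv hva).le

lemma potential_lt [Finite V] (hT : T.IsTree) (hadj : T.Adj a b) {U : Set V}
    (hU : U ⊆ D.branch s(a, b) b) {u : V} (hu : u ∈ U) (hua : u ∉ D.bag a) :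
    D.potential U b < D.potential U a :=
  Finset.sum_lt_sum
    (fun _ hv => bagDist_le_of_mem_branch hT hadj (hU ((Set.toFinite U).mem_toFinset.1 hv)))
    ⟨u, (Set.toFinite U).mem_toFinset.2 hu, bagDist_lt hT hadj (hU hu) hua⟩

/-- The invariant of the construction: on `U`, the non-zero colours are distinct, at most
`w + 1`, and carried by vertices of the bag at `i`; colour `0` marks the vertices that no
longer need to be distinguished. -/
structure IsBoundaryLabelling (D : TreeDecomp G T) (w : ℕ) (U : Set V) (i : ι) (χ : V → ℕ) :
    Prop where
  le : ∀ x ∈ U, χ x ≤ w + 1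
  subset_bag : U ∩ χ.support ⊆ D.bag i
  injOn : Set.InjOn χ (U ∩ χ.support)

variable {w : ℕ} {U : Set V} {i : ι} {χ : V → ℕ}

theorem IsBoundaryLabelling.exists_extend [Finite V] (h : D.IsBoundaryLabelling w U i χ)
    (hbag : (D.bag i).ncard ≤ w + 1) {I : Set V} (hIU : I ⊆ U) (hI : I ⊆ D.bag i) :
    ∃ χ' : V → ℕ, (∀ x, χ' x ≤ w + 1) ∧ U ∩ χ'.support = U ∩ χ.support ∪ I ∧
      Set.InjOn χ' (U ∩ χ.support ∪ I) ∧ Set.EqOn χ' χ (U ∩ χ.support) := by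
  set S := U ∩ χ.support
  have hSI : S ∪ I ⊆ D.bag i := Set.union_subset h.subset_bag hI
  obtain ⟨ψ, hψS, hψinj, hψY⟩ := Set.exists_extend_injOn (Y := Set.Icc 1 (w + 1))
    Set.subset_union_left (Set.toFinite _) (Set.finite_Icc 1 (w + 1))
    (by simpa using (Set.ncard_le_ncard hSI).trans hbag) h.injOn
    fun x hx => ⟨Nat.one_le_iff_ne_zero.2 hx.2, h.le x hx.1⟩
  have hind : Set.EqOn ((S ∪ I).indicator ψ) ψ (S ∪ I) := fun x hx => Set.indicator_of_mem hx ψ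
  have hψ0 : ∀ x ∈ S ∪ I, ψ x ≠ 0 := fun x hx => Nat.one_le_iff_ne_zero.1 (hψY hx).1
  refine ⟨(S ∪ I).indicator ψ, fun x => ?_, ?_, hψinj.congr hind.symm,
    (hind.mono Set.subset_union_left).trans hψS⟩
  · by_cases hx : x ∈ S ∪ I
    · exact hind hx ▸ (hψY hx).2
    · rw [Set.indicator_of_notMem hx]; omega
  · refine Set.Subset.antisymm (fun x hx => Set.support_indicator_subset hx.2) fun x hx => ?_
    refine ⟨hx.elim (·.1) (hIU ·), ?_⟩
    rw [Function.mem_support, hind hx]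
    exact hψ0 x hx

end TreeDecomp

namespace UCWF

open TreeDecomp

variable {σ : Signature} {A : CStruc σ} [Finite A.carrier] {ι : Type} {T : SimpleGraph ι}
  {D : TreeDecomp A.gaifman T} {w : ℕ}

theorem induce_of_branches (hT : T.IsTree) {a b : ι} (hadj : T.Adj a b)
    (hbag : (D.bag a).ncard ≤ w + 1) {U : Set A.carrier} {χ : A.carrier → ℕ}
    (h : D.IsBoundaryLabelling w U a χ)
    (ih₀ : ∀ χ', D.IsBoundaryLabelling w (U ∩ D.branch s(a, b) a) a χ' →
      UCWF σ (w + 2) (A.induce (U ∩ D.branch s(a, b) a) χ'))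
    (ih₁ : ∀ χ', D.IsBoundaryLabelling w (U ∩ D.branch s(a, b) b) b χ' →
      UCWF σ (w + 2) (A.induce (U ∩ D.branch s(a, b) b) χ')) :
    UCWF σ (w + 2) (A.induce U χ) := by
  set U₀ := U ∩ D.branch s(a, b) a
  set U₁ := U ∩ D.branch s(a, b) b
  set S := U ∩ χ.support
  have hU : U₀ ∪ U₁ = U := by
    rw [← Set.inter_union_distrib_left, Set.inter_eq_left]
    exact fun v _ => D.mem_branch_or hT hadj v
  have hI : U₀ ∩ U₁ ⊆ D.bag a ∩ D.bag b :=
    fun v hv => branch_inter_branch_subset hT hadj ⟨hv.1.2, hv.2.2⟩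
  have hSU₀ : S ⊆ U₀ := fun v hv => ⟨hv.1, bag_subset_branch _ a (h.subset_bag hv)⟩
  obtain ⟨χ', hle, hsupp, hinj, hχS⟩ :=
    h.exists_extend hbag (fun v hv => hv.1.1) fun v hv => (hI hv).1
  have hsupp₀ : U₀ ∩ χ'.support ⊆ S ∪ U₀ ∩ U₁ := fun v hv => hsupp ▸ ⟨hv.1.1, hv.2⟩
  have hsupp₁ : U₁ ∩ χ'.support ⊆ U₀ ∩ U₁ := fun v hv => by
    rcases (hsupp ▸ ⟨hv.1.1, hv.2⟩ : v ∈ S ∪ U₀ ∩ U₁) with hvS | hvI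
    exacts [⟨hSU₀ hvS, hv.1⟩, hvI]
  have hglued : UCWF σ (w + 2) (A.induce (U₀ ∪ U₁) χ') := by
    refine induce_union (fun u hu v hv => not_adj_of_mem_branch hT hadj
        ⟨hu.1.2, fun h' => hu.2 ⟨hu.1.1, h'⟩⟩ ⟨hv.1.2, fun h' => hv.2 ⟨hv.1.1, h'⟩⟩)
      (Set.toFinite _) (fun x _ => by have := hle x; omega) (fun x hx y hy hxy => ?_)
      (ih₀ χ' ⟨fun x _ => hle x,
        hsupp₀.trans (Set.union_subset h.subset_bag fun v hv => (hI hv).1), hinj.mono hsupp₀⟩)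
      (ih₁ χ' ⟨fun x _ => hle x, hsupp₁.trans fun v hv => (hI hv).2,
        hinj.mono (hsupp₁.trans Set.subset_union_right)⟩)
    have hy' : y ∈ U ∩ χ'.support := hsupp ▸ Or.inr hy
    have hx' : x ∈ U ∩ χ'.support :=
      ⟨hU ▸ hx, by rw [Function.mem_support, hxy]; exact hy'.2⟩
    exact hinj (hsupp ▸ hx') (hsupp ▸ hy') hxy
  exact induce_of_extend_labels (hU ▸ hglued) hsupp hinj hχS

theorem induce_of_treeDecomp (hA : A.posFactSymbols.Finite) (hT : T.IsTree)
    (hbag : ∀ i, (D.bag i).ncard ≤ w + 1)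
    (U : Set A.carrier) (i : ι) (χ : A.carrier → ℕ) (h : D.IsBoundaryLabelling w U i χ) :
    UCWF σ (w + 2) (A.induce U χ) := by
  induction hn : U.ncard using Nat.strong_induction_on generalizing U i χ with
  | _ n ihn =>
  induction hm : D.potential U i using Nat.strong_induction_on generalizing i χ with
  | _ m ihm =>
  by_cases hUi : U ⊆ D.bag i
  · exact induce_of_ncard_le hA (Set.toFinite U)
      (((Set.ncard_le_ncard hUi).trans (hbag i)).trans_lt (Nat.lt_succ_self _))
      fun x hx => Nat.lt_succ_of_le (h.le x hx)
  obtain ⟨u, huU, hui⟩ := Set.not_subset.1 hUi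
  obtain ⟨j, hj⟩ := D.mem_bag u
  obtain ⟨b, hadj, hbj⟩ := (hT.connected.preconnected i j).exists_adj_reachable_deleteEdges
    fun hij => hui (hij ▸ hj)
  have hu : u ∈ D.branch s(i, b) b := ⟨j, hbj.symm, hj⟩
  by_cases hdeg : U ⊆ D.branch s(i, b) b
  · -- all of `U` lies beyond `b`, so the labelled vertices are in `D.bag b` too
    refine ihm _ (hm ▸ potential_lt hT hadj hdeg huU hui) b χ ⟨h.le, fun x hx => ?_, h.injOn⟩ rfl
    exact (branch_inter_branch_subset hT hadj
      ⟨bag_subset_branch _ i (h.subset_bag hx), hdeg hx.1⟩).2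
  · have hlt₀ : (U ∩ D.branch s(i, b) i).ncard < n := hn ▸ Set.ncard_lt_ncard
      ⟨Set.inter_subset_left, fun hU => hui (branch_inter_branch_subset hT hadj
        ⟨(hU huU).2, hu⟩).1⟩
    have hlt₁ : (U ∩ D.branch s(i, b) b).ncard < n := hn ▸ Set.ncard_lt_ncard
      ⟨Set.inter_subset_left, fun hU => hdeg fun x hx => (hU hx).2⟩
    exact induce_of_branches hT hadj (hbag i) h (fun χ' h' => ihn _ hlt₀ _ i χ' h' rfl)
      fun χ' h' => ihn _ hlt₁ _ b χ' h' rfl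

end UCWF

theorem twLe_card {V : Type} [Finite V] (G : SimpleGraph V) : twLe G (Nat.card V) := by
  refine ⟨Unit, ⊥, .of_subsingleton, ⟨fun _ => Set.univ, fun _ => ⟨(), trivial⟩,
    fun _ _ _ => ⟨(), trivial, trivial⟩, fun v => ?_⟩, fun _ => by simp [Set.ncard_univ]⟩
  have : Nonempty {i : Unit | v ∈ Set.univ} := ⟨⟨(), trivial⟩⟩
  exact SimpleGraph.IsTree.of_subsingleton.connected

/-- every (finite) relational structure satisfies
ucwf(A) ≤ tw(G_A) + 2. -/
theorem stmt14 {σ : Signature} (A : CStruc σ) [Finite A.carrier]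
    (h0 : ∀ a, A.col a = 0) :
    ucwf A ≤ tw A.gaifman + 2 := by
  by_cases hA : A.posFactSymbols.Finite
  · obtain ⟨ι, T, hT, D, hbag⟩ : twLe A.gaifman (tw A.gaifman) :=
      Nat.sInf_mem (s := {w | twLe A.gaifman w}) ⟨_, twLe_card A.gaifman⟩
    have hlabel : D.IsBoundaryLabelling (tw A.gaifman) Set.univ hT.connected.nonempty.some
        fun _ => 0 := ⟨fun _ _ => Nat.zero_le _, by simp, by simp⟩
    exact Nat.sInf_le (UCWF.iso (A := A.induce Set.univ fun _ => 0)
      ⟨Equiv.Set.univ A.carrier, fun _ _ => Iff.rfl, fun a => h0 a.1⟩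
      (UCWF.induce_of_treeDecomp hA hT hbag _ _ _ hlabel))
  · have : {k | UCWF σ k A} = ∅ :=
      Set.eq_empty_of_forall_notMem fun _ hk => hA (UCWF.posFactSymbols_finite hk)
    simp [ucwf, this]
end
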